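/- arXiv:2206.12933 — 5 statements merged into one kernel-verified Lean document; each statement's English description precedes it below -/
import Mathlib

section
/- Spectral decomposition of the reconstruction MSE: let U be an N×N real orthogonal matrix, λ : Fin N → ℝ, g_c, g_d : ℝ → ℝ, x ∈ ℝ^N a fixed signal with spectral projection x* = Uᵀx, and ε a mean-zero random vector with E[ε_i ε_j] = σ²·δ_{ij} and square-integrable components. Define the reconstruction x̂ = U·diag(g_d(λ_i)·g_c(λ_i))·Uᵀ·x + U·diag(g_d(λ_i))·Uᵀ·ε. Then E‖x̂ − x‖² = Σ_{i=1}^{N} [(g_d(λ_i)·g_c(λ_i) − 1)²·(x*_i)² + g_d(λ_i)²·σ²]. -/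
/-!
In the eigenbasis the reconstruction error is `U (b + B ε)` with bias `b i = (g_d g_c - 1) x*_i`
and noise matrix `B = diag(g_d) Uᵀ`. The orthogonal `U` preserves the norm, the cross term
`2 b_i (B_i ⬝ ε)` has mean zero, and whiteness gives `E[(B_i ⬝ ε)²] = σ² ‖B_i‖² = σ² g_d(λ_i)²`,
since the columns of `U` are unit vectors.
-/

open MeasureTheory Matrix

structure IsWhiteNoise {Ω ι : Type*} [MeasurableSpace Ω] [DecidableEq ι] (μ : Measure Ω)
    (ε : Ω → ι → ℝ) (σ2 : ℝ) : Prop where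
  memLp : ∀ i, MemLp (fun ω => ε ω i) 2 μ
  integral_eq_zero : ∀ i, ∫ ω, ε ω i ∂μ = 0
  integral_mul : ∀ i j, ∫ ω, ε ω i * ε ω j ∂μ = if i = j then σ2 else 0

namespace IsWhiteNoise

variable {Ω ι : Type*} [MeasurableSpace Ω] [DecidableEq ι] {μ : Measure Ω} {ε : Ω → ι → ℝ}
  {σ2 : ℝ}

lemma integrable [IsFiniteMeasure μ] (h : IsWhiteNoise μ ε σ2) (i : ι) :
    Integrable (fun ω => ε ω i) μ :=
  (h.memLp i).integrable one_le_two

lemma integrable_mul (h : IsWhiteNoise μ ε σ2) (i j : ι) :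
    Integrable (fun ω => ε ω i * ε ω j) μ :=
  (h.memLp i).integrable_mul (h.memLp j)

variable [Fintype ι]

lemma memLp_dotProduct (h : IsWhiteNoise μ ε σ2) (b : ι → ℝ) :
    MemLp (fun ω => b ⬝ᵥ ε ω) 2 μ :=
  memLp_finsetSum _ fun k _ => (h.memLp k).const_mul (b k)

lemma integral_dotProduct [IsFiniteMeasure μ] (h : IsWhiteNoise μ ε σ2) (b : ι → ℝ) :
    ∫ ω, b ⬝ᵥ ε ω ∂μ = 0 := by
  simp only [dotProduct]
  rw [integral_finsetSum _ fun k _ => (h.integrable k).const_mul (b k)]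
  simp [integral_const_mul, h.integral_eq_zero]

lemma integral_dotProduct_sq (h : IsWhiteNoise μ ε σ2) (b : ι → ℝ) :
    ∫ ω, (b ⬝ᵥ ε ω) ^ 2 ∂μ = σ2 * b ⬝ᵥ b := by
  have hexpand : ∀ ω, (b ⬝ᵥ ε ω) ^ 2 = ∑ k, ∑ l, b k * b l * (ε ω k * ε ω l) := by
    intro ω
    simp only [dotProduct, sq, Finset.sum_mul_sum]
    exact Finset.sum_congr rfl fun k _ => Finset.sum_congr rfl fun l _ => by ring
  simp_rw [hexpand]
  rw [integral_finsetSum _ fun k _ => integrable_finsetSum _ fun l _ =>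
    (h.integrable_mul k l).const_mul _]
  simp_rw [integral_finsetSum _ fun l _ => (h.integrable_mul _ l).const_mul _,
    integral_const_mul, h.integral_mul]
  simp [dotProduct, Finset.mul_sum, mul_comm]

lemma integral_add_dotProduct_sq [IsProbabilityMeasure μ] (h : IsWhiteNoise μ ε σ2) (c : ℝ)
    (b : ι → ℝ) : ∫ ω, (c + b ⬝ᵥ ε ω) ^ 2 ∂μ = c ^ 2 + σ2 * b ⬝ᵥ b := by
  have hb := h.memLp_dotProduct b
  have hlin : Integrable (fun ω => c ^ 2 + 2 * c * b ⬝ᵥ ε ω) μ :=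
    (integrable_const _).add ((hb.integrable one_le_two).const_mul _)
  simp_rw [add_sq]
  rw [integral_add hlin hb.integrable_sq,
    integral_add (integrable_const _) ((hb.integrable one_le_two).const_mul _),
    integral_const_mul, h.integral_dotProduct, h.integral_dotProduct_sq]
  simp

lemma integral_add_mulVec_dotProduct_self {κ : Type*} [Fintype κ] [IsProbabilityMeasure μ]
    (h : IsWhiteNoise μ ε σ2) (a : κ → ℝ) (B : Matrix κ ι ℝ) :
    ∫ ω, (a + B *ᵥ ε ω) ⬝ᵥ (a + B *ᵥ ε ω) ∂μ = ∑ i, (a i ^ 2 + σ2 * B.row i ⬝ᵥ B.row i) := by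
  have hcoord : ∀ ω, (a + B *ᵥ ε ω) ⬝ᵥ (a + B *ᵥ ε ω) = ∑ i, (a i + B.row i ⬝ᵥ ε ω) ^ 2 :=
    fun ω => by simp only [dotProduct, sq, Pi.add_apply, mulVec_apply]
  have hint : ∀ i, Integrable (fun ω => (a i + B.row i ⬝ᵥ ε ω) ^ 2) μ :=
    fun i => ((memLp_const (a i)).add (h.memLp_dotProduct (B.row i))).integrable_sq
  simp_rw [hcoord]
  rw [integral_finsetSum _ fun i _ => hint i]
  simp_rw [h.integral_add_dotProduct_sq]

end IsWhiteNoise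

lemma EuclideanSpace.norm_equiv_symm_sq {ι : Type*} [Fintype ι] (v : ι → ℝ) :
    ‖(EuclideanSpace.equiv ι ℝ).symm v‖ ^ 2 = v ⬝ᵥ v := by
  rw [EuclideanSpace.real_norm_sq_eq]
  simp [dotProduct, sq]

namespace Matrix

variable {ι : Type*} [Fintype ι] [DecidableEq ι] {U : Matrix ι ι ℝ}

lemma mulVec_dotProduct_mulVec_of_transpose_mul_self (hU : Uᵀ * U = 1) (v : ι → ℝ) :
    U *ᵥ v ⬝ᵥ U *ᵥ v = v ⬝ᵥ v := by
  rw [dotProduct_mulVec, ← mulVec_transpose, mulVec_mulVec, hU, one_mulVec]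

lemma diagonal_mul_transpose_row_dotProduct_self (hU : Uᵀ * U = 1) (d : ι → ℝ) (i : ι) :
    (diagonal d * Uᵀ).row i ⬝ᵥ (diagonal d * Uᵀ).row i = d i ^ 2 := by
  have hcol : ∑ k, U k i * U k i = 1 := by simpa [mul_apply] using congr_fun₂ hU i i
  calc (diagonal d * Uᵀ).row i ⬝ᵥ (diagonal d * Uᵀ).row i = d i ^ 2 * ∑ k, U k i * U k i := by
        simp only [dotProduct, row_apply, diagonal_mul, transpose_apply, Finset.mul_sum]
        exact Finset.sum_congr rfl fun k _ => by ring
    _ = d i ^ 2 := by rw [hcol, mul_one]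

lemma reconstruction_error_eq (hU : U * Uᵀ = 1) (d₁ d₂ : ι → ℝ) (x e : ι → ℝ) :
    U *ᵥ (diagonal d₁ *ᵥ (Uᵀ *ᵥ x)) + U *ᵥ (diagonal d₂ *ᵥ (Uᵀ *ᵥ e)) - x
      = U *ᵥ ((fun i => (d₁ i - 1) * (Uᵀ *ᵥ x) i) + (diagonal d₂ * Uᵀ) *ᵥ e) := by
  have hx : U *ᵥ (Uᵀ *ᵥ x) = x := by rw [mulVec_mulVec, hU, one_mulVec]
  conv_lhs => enter [2]; rw [← hx]
  rw [← mulVec_add, ← mulVec_sub, ← mulVec_mulVec]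
  congr 1
  ext i
  simp only [Pi.add_apply, Pi.sub_apply, mulVec_diagonal]
  ring

end Matrix

/-- Spectral decomposition of the reconstruction MSE.  For an orthogonal `U`,
eigenvalues `λ`, filters `g_c, g_d`, a fixed signal `x` with spectral projection `x* = Uᵀ x`,
and a mean-zero random vector `ε` with `E[ε_i ε_j] = σ² δ_{ij}` and square-integrable
components, the reconstruction
`x̂ = U diag(g_d(λ_i) g_c(λ_i)) Uᵀ x + U diag(g_d(λ_i)) Uᵀ ε` satisfies
`E‖x̂ − x‖² = ∑ i, (g_d(λ_i) g_c(λ_i) − 1)² (x*_i)² + g_d(λ_i)² σ²`. -/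
theorem reconstruction_mse_spectral_decomposition
    {N : ℕ} {Ω : Type*} [MeasurableSpace Ω] (μ : Measure Ω) [IsProbabilityMeasure μ]
    (ε : Ω → Fin N → ℝ) (hεL2 : ∀ i, MemLp (fun ω => ε ω i) 2 μ)
    (hεmean : ∀ i, ∫ ω, ε ω i ∂μ = 0)
    (σ2 : ℝ)
    (hcov : ∀ i j, ∫ ω, ε ω i * ε ω j ∂μ = if i = j then σ2 else 0)
    (U : Matrix (Fin N) (Fin N) ℝ) (hU : Uᵀ * U = 1)
    (lam : Fin N → ℝ) (gc gd : ℝ → ℝ) (x : Fin N → ℝ)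
    (xstar : Fin N → ℝ) (hxstar : xstar = Uᵀ.mulVec x)
    (xhat : Ω → Fin N → ℝ)
    (hxhat : ∀ ω, xhat ω =
      U.mulVec ((Matrix.diagonal fun i => gd (lam i) * gc (lam i)).mulVec (Uᵀ.mulVec x))
        + U.mulVec ((Matrix.diagonal fun i => gd (lam i)).mulVec (Uᵀ.mulVec (ε ω)))) :
    ∫ ω, ‖(EuclideanSpace.equiv (Fin N) ℝ).symm (xhat ω - x)‖ ^ 2 ∂μ
      = ∑ i, ((gd (lam i) * gc (lam i) - 1) ^ 2 * xstar i ^ 2 + gd (lam i) ^ 2 * σ2) := by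
  subst hxstar
  set bias : Fin N → ℝ := fun i => (gd (lam i) * gc (lam i) - 1) * (Uᵀ *ᵥ x) i
  set B := diagonal (fun i => gd (lam i)) * Uᵀ
  have herr : ∀ ω, xhat ω - x = U *ᵥ (bias + B *ᵥ ε ω) := fun ω => by
    rw [hxhat, reconstruction_error_eq (mul_eq_one_comm.mp hU)]
  have hε : IsWhiteNoise μ ε σ2 := ⟨hεL2, hεmean, hcov⟩
  simp_rw [herr, EuclideanSpace.norm_equiv_symm_sq,
    mulVec_dotProduct_mulVec_of_transpose_mul_self hU, hε.integral_add_mulVec_dotProduct_self]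
  refine Finset.sum_congr rfl fun i _ => ?_
  rw [diagonal_mul_transpose_row_dotProduct_self hU]
  ring
end

section
/- Proposition 3 (intermediate bound): let g_c ≠ 0 and σ be real numbers and 0 < E ≤ x̄. Then the modified graph wiener filter value ḡ = g_c·x̄/(g_c²·x̄ + σ²) satisfies (ḡ·g_c − 1)²·E + ḡ²·σ² ≤ σ²·x̄/(g_c²·x̄ + σ²) ≤ σ²/g_c². -/
/-- Proposition 3, intermediate bound: let `g_c ≠ 0`, `σ` be reals and
`0 < E ≤ x̄`.  Then the modified graph wiener filter value `ḡ = g_c x̄ / (g_c² x̄ + σ²)`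
satisfies `(ḡ g_c − 1)² E + ḡ² σ² ≤ σ² x̄ / (g_c² x̄ + σ²) ≤ σ² / g_c²`. -/
theorem modified_wiener_intermediate_bound
    (gc σ E xbar : ℝ) (hgc : gc ≠ 0) (hE : 0 < E) (hEx : E ≤ xbar) :
    ((gc * xbar / (gc ^ 2 * xbar + σ ^ 2)) * gc - 1) ^ 2 * E
          + (gc * xbar / (gc ^ 2 * xbar + σ ^ 2)) ^ 2 * σ ^ 2
        ≤ σ ^ 2 * xbar / (gc ^ 2 * xbar + σ ^ 2)
      ∧ σ ^ 2 * xbar / (gc ^ 2 * xbar + σ ^ 2) ≤ σ ^ 2 / gc ^ 2 := by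
  have hgc2 : 0 < gc ^ 2 := by positivity
  have hx : 0 < xbar := lt_of_lt_of_le hE hEx
  have hD : 0 < gc ^ 2 * xbar + σ ^ 2 := by positivity
  constructor
  · have key : (gc * xbar / (gc ^ 2 * xbar + σ ^ 2) * gc - 1) ^ 2 * E
          + (gc * xbar / (gc ^ 2 * xbar + σ ^ 2)) ^ 2 * σ ^ 2
        = σ ^ 2 * (σ ^ 2 * E + gc ^ 2 * xbar ^ 2) / (gc ^ 2 * xbar + σ ^ 2) ^ 2 := by
      field_simp
      ring
    rw [key, div_le_div_iff₀ (by positivity) hD]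
    nlinarith [mul_nonneg (mul_nonneg hD.le (sq_nonneg (σ ^ 2))) (sub_nonneg.2 hEx)]
  · rw [div_le_div_iff₀ hD hgc2]
    nlinarith [sq_nonneg (σ ^ 2)]
end

section
/- Distance monotonicity toward the wiener filter (Proposition 3 auxiliary): let g_c > 0, σ² > 0, and 0 < E ≤ x̄₁ ≤ x̄₂. With g_w = g_c·E/(g_c²·E + σ²), ḡ₁ = g_c·x̄₁/(g_c²·x̄₁ + σ²) and ḡ₂ = g_c·x̄₂/(g_c²·x̄₂ + σ²), one has |ḡ₁ − g_w| ≤ |ḡ₂ − g_w|. -/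
lemma wiener_mono (gc σ2 a b : ℝ) (hgc : 0 < gc) (hσ2 : 0 < σ2)
    (ha : 0 < a) (hab : a ≤ b) :
    gc * a / (gc ^ 2 * a + σ2) ≤ gc * b / (gc ^ 2 * b + σ2) := by
  have hda : 0 < gc ^ 2 * a + σ2 := by positivity
  have hdb : 0 < gc ^ 2 * b + σ2 := by nlinarith [sq_nonneg gc]
  rw [div_le_div_iff₀ hda hdb]
  nlinarith [sq_nonneg gc, mul_pos hgc hσ2]

/-- Distance monotonicity toward the wiener filter: let `g_c > 0`, `σ² > 0`,
and `0 < E ≤ x̄₁ ≤ x̄₂`.  With `g_w = g_c E / (g_c² E + σ²)`,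
`ḡ₁ = g_c x̄₁ / (g_c² x̄₁ + σ²)` and `ḡ₂ = g_c x̄₂ / (g_c² x̄₂ + σ²)`, one has
`|ḡ₁ − g_w| ≤ |ḡ₂ − g_w|`. -/
theorem modified_wiener_distance_monotone
    (gc σ2 E xbar1 xbar2 : ℝ) (hgc : 0 < gc) (hσ2 : 0 < σ2)
    (hE : 0 < E) (h1 : E ≤ xbar1) (h2 : xbar1 ≤ xbar2)
    (gw g1 g2 : ℝ)
    (hgw : gw = gc * E / (gc ^ 2 * E + σ2))
    (hg1 : g1 = gc * xbar1 / (gc ^ 2 * xbar1 + σ2))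
    (hg2 : g2 = gc * xbar2 / (gc ^ 2 * xbar2 + σ2)) :
    |g1 - gw| ≤ |g2 - gw| := by
  have hA : gw ≤ g1 := by
    rw [hgw, hg1]; exact wiener_mono gc σ2 E xbar1 hgc hσ2 hE h1
  have hB : g1 ≤ g2 := by
    rw [hg1, hg2]; exact wiener_mono gc σ2 xbar1 xbar2 hgc hσ2 (lt_of_lt_of_le hE h1) h2
  rw [abs_of_nonneg (by linarith), abs_of_nonneg (by linarith)]
  linarith
end

section
/- Proposition 3 (ordering of spectral reconstruction errors): let g_c > 0, σ² > 0, and 0 < E ≤ x̄₁ ≤ x̄₂. Writing S(t) = (t·g_c − 1)²·E + t²·σ² and ḡ_j = g_c·x̄_j/(g_c²·x̄_j + σ²) for j = 1, 2, one has S(ḡ₁) ≤ S(ḡ₂) ≤ S(1/g_c). -/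
/-!
The error `S` is a convex quadratic in the filter value whose minimiser is the Wiener filter
`ḡ(E)` built from the true energy. The Wiener filter `ḡ(x) = g_c x / (g_c² x + σ²)` increases
with `x` and stays below the inverse filter `1 / g_c`, so `E ≤ x̄₁ ≤ x̄₂` places
`ḡ(E) ≤ ḡ(x̄₁) ≤ ḡ(x̄₂) ≤ 1 / g_c` on the branch where `S` is increasing.
-/

open Set

noncomputable section

def spectralError (gc σ2 E t : ℝ) : ℝ := (t * gc - 1) ^ 2 * E + t ^ 2 * σ2

def wienerFilter (gc σ2 x : ℝ) : ℝ := gc * x / (gc ^ 2 * x + σ2)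

lemma spectralError_eq_sq_sub_wienerFilter {gc σ2 E : ℝ} (hA : 0 < gc ^ 2 * E + σ2) (t : ℝ) :
    spectralError gc σ2 E t =
      (gc ^ 2 * E + σ2) * (t - wienerFilter gc σ2 E) ^ 2 + E * σ2 / (gc ^ 2 * E + σ2) := by
  unfold spectralError wienerFilter
  field_simp
  ring

lemma spectralError_monotoneOn {gc σ2 E : ℝ} (hA : 0 < gc ^ 2 * E + σ2) :
    MonotoneOn (spectralError gc σ2 E) (Ici (wienerFilter gc σ2 E)) := by
  intro s hs t ht hst
  rw [spectralError_eq_sq_sub_wienerFilter hA, spectralError_eq_sq_sub_wienerFilter hA]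
  have hsq : (s - wienerFilter gc σ2 E) ^ 2 ≤ (t - wienerFilter gc σ2 E) ^ 2 :=
    pow_le_pow_left₀ (sub_nonneg.mpr hs) (by linarith) 2
  gcongr

lemma wienerFilter_monotoneOn {gc σ2 : ℝ} (hgc : 0 ≤ gc) (hσ2 : 0 < σ2) :
    MonotoneOn (wienerFilter gc σ2) (Ici 0) := by
  intro x (hx : 0 ≤ x) y (hy : 0 ≤ y) hxy
  unfold wienerFilter
  rw [div_le_div_iff₀ (by positivity) (by positivity)]
  nlinarith [mul_nonneg (mul_nonneg hgc hσ2.le) (sub_nonneg.mpr hxy)]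

lemma wienerFilter_le_inv {gc σ2 x : ℝ} (hgc : 0 < gc) (hσ2 : 0 < σ2) (hx : 0 ≤ x) :
    wienerFilter gc σ2 x ≤ 1 / gc := by
  unfold wienerFilter
  rw [div_le_div_iff₀ (by positivity) hgc]
  nlinarith

/-- Proposition 3, ordering of spectral reconstruction errors: let
`g_c > 0`, `σ² > 0`, and `0 < E ≤ x̄₁ ≤ x̄₂`.  Writing `S(t) = (t g_c − 1)² E + t² σ²` and
`ḡ_j = g_c x̄_j / (g_c² x̄_j + σ²)`, one has `S(ḡ₁) ≤ S(ḡ₂) ≤ S(1/g_c)`. -/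
theorem modified_wiener_spectral_error_ordering
    (gc σ2 E xbar1 xbar2 : ℝ) (hgc : 0 < gc) (hσ2 : 0 < σ2)
    (hE : 0 < E) (h1 : E ≤ xbar1) (h2 : xbar1 ≤ xbar2)
    (S : ℝ → ℝ) (hS : ∀ t, S t = (t * gc - 1) ^ 2 * E + t ^ 2 * σ2)
    (g1 g2 : ℝ)
    (hg1 : g1 = gc * xbar1 / (gc ^ 2 * xbar1 + σ2))
    (hg2 : g2 = gc * xbar2 / (gc ^ 2 * xbar2 + σ2)) :
    S g1 ≤ S g2 ∧ S g2 ≤ S (1 / gc) := by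
  obtain rfl : S = spectralError gc σ2 E := funext hS
  change g1 = wienerFilter gc σ2 xbar1 at hg1
  change g2 = wienerFilter gc σ2 xbar2 at hg2
  subst hg1 hg2
  have hx1 : 0 ≤ xbar1 := hE.le.trans h1
  have hx2 : 0 ≤ xbar2 := hx1.trans h2
  have hg_mono := wienerFilter_monotoneOn hgc.le hσ2
  have hE_g1 : wienerFilter gc σ2 E ≤ wienerFilter gc σ2 xbar1 := hg_mono hE.le hx1 h1
  have hg1_g2 : wienerFilter gc σ2 xbar1 ≤ wienerFilter gc σ2 xbar2 := hg_mono hx1 hx2 h2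
  have hg2_inv : wienerFilter gc σ2 xbar2 ≤ 1 / gc := wienerFilter_le_inv hgc hσ2 hx2
  have hS_mono := spectralError_monotoneOn (gc := gc) (by positivity : 0 < gc ^ 2 * E + σ2)
  exact ⟨hS_mono hE_g1 (hE_g1.trans hg1_g2) hg1_g2,
    hS_mono (hE_g1.trans hg1_g2) (hE_g1.trans (hg1_g2.trans hg2_inv)) hg2_inv⟩
end
end

section
/- Probabilistic form of Proposition 2: in the spectral reconstruction x̂ = U·diag(g_d(λ_i)·g_c(λ_i))·Uᵀ·x + U·diag(g_d(λ_i))·Uᵀ·ε with U orthogonal, x deterministic with x* = Uᵀx, ε mean-zero with E[ε_i ε_j] = σ²·δ_{ij} and σ² > 0, if the deconvolution filter takes the wiener values g_d(λ_i) = g_c(λ_i)·(x*_i)²/(g_c(λ_i)²·(x*_i)² + σ²), then E‖x − x̂‖² = Σ_{i=1}^{N} σ²·(x*_i)²/(g_c(λ_i)²·(x*_i)² + σ²), and this is at most Σ_{i=1}^{N} σ²/g_c(λ_i)² whenever g_c(λ_i) ≠ 0 for all i. -/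
/-! Because `U` is orthogonal, `x - x̂ = U v` with `vᵢ = (1 - g_d g_c) x*ᵢ - g_d ε*ᵢ`, where
`ε* = Uᵀ ε` is again centred white noise of variance `σ²`, and `‖U v‖ = ‖v‖`. Hence
`E‖x - x̂‖² = ∑ᵢ (1 - g_d g_c)² (x*ᵢ)² + g_d² σ²`, and at the Wiener gain each term collapses to
`σ² (x*ᵢ)² / (g_c² (x*ᵢ)² + σ²)`, which is at most `σ² / g_c²` since `σ⁴ ≥ 0`. -/

open MeasureTheory Matrix Finset

section Orthogonal

variable {n : Type*} [Fintype n] [DecidableEq n] {U : Matrix n n ℝ}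

theorem dotProduct_mulVec_self_of_transpose_mul_self (hU : Uᵀ * U = 1) (v : n → ℝ) :
    U *ᵥ v ⬝ᵥ U *ᵥ v = v ⬝ᵥ v := by
  rw [dotProduct_mulVec, ← mulVec_transpose, mulVec_mulVec, hU, one_mulVec]

theorem norm_sq_equiv_symm_mulVec (hU : Uᵀ * U = 1) (v : n → ℝ) :
    ‖(EuclideanSpace.equiv n ℝ).symm (U *ᵥ v)‖ ^ 2 = ∑ i, v i ^ 2 := by
  rw [EuclideanSpace.real_norm_sq_eq]
  simpa [dotProduct, sq] using dotProduct_mulVec_self_of_transpose_mul_self hU v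

theorem sub_spectral_filter_eq (hU : U * Uᵀ = 1) (a b x e : n → ℝ) :
    x - (U *ᵥ (diagonal a *ᵥ (Uᵀ *ᵥ x)) + U *ᵥ (diagonal b *ᵥ (Uᵀ *ᵥ e)))
      = U *ᵥ fun i => (1 - a i) * (Uᵀ *ᵥ x) i - b i * (Uᵀ *ᵥ e) i := by
  have hx : x = U *ᵥ (Uᵀ *ᵥ x) := by rw [mulVec_mulVec, hU, one_mulVec]
  nth_rw 1 [hx]
  rw [← mulVec_add, ← mulVec_sub]
  congr 1
  ext i
  simp only [Pi.sub_apply, Pi.add_apply, mulVec_diagonal]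
  ring

end Orthogonal

section WhiteNoise

variable {Ω ι m : Type*} [Fintype ι] [MeasurableSpace Ω] {μ : Measure Ω} {ε : Ω → ι → ℝ}

theorem memLp_mulVec_apply {p : ENNReal} (hε : ∀ j, MemLp (fun ω => ε ω j) p μ)
    (A : Matrix m ι ℝ) (i : m) : MemLp (fun ω => (A *ᵥ ε ω) i) p μ :=
  memLp_finsetSum _ fun j _ => (hε j).const_mul (A i j)

theorem integral_mulVec_apply_eq_zero (hε : ∀ j, Integrable (fun ω => ε ω j) μ)
    (hmean : ∀ j, ∫ ω, ε ω j ∂μ = 0) (A : Matrix m ι ℝ) (i : m) :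
    ∫ ω, (A *ᵥ ε ω) i ∂μ = 0 := by
  simp only [mulVec, dotProduct]
  rw [integral_finsetSum _ fun j _ => (hε j).const_mul _]
  simp [integral_const_mul, hmean]

theorem integral_mulVec_apply_sq [DecidableEq ι] (hε : ∀ j, MemLp (fun ω => ε ω j) 2 μ)
    {σ2 : ℝ} (hcov : ∀ j k, ∫ ω, ε ω j * ε ω k ∂μ = if j = k then σ2 else 0)
    (A : Matrix m ι ℝ) (i : m) :
    ∫ ω, (A *ᵥ ε ω) i ^ 2 ∂μ = σ2 * (A * Aᵀ) i i := by
  have hprod : ∀ j k, Integrable (fun ω => A i j * A i k * (ε ω j * ε ω k)) μ := fun j k =>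
    ((hε j).integrable_mul (hε k)).const_mul _
  have hexpand : ∀ ω, (A *ᵥ ε ω) i ^ 2 = ∑ j, ∑ k, A i j * A i k * (ε ω j * ε ω k) := by
    intro ω
    simp only [mulVec, dotProduct, sq, sum_mul_sum]
    exact sum_congr rfl fun j _ => sum_congr rfl fun k _ => by ring
  simp_rw [hexpand]
  rw [integral_finsetSum _ fun j _ => integrable_finsetSum _ fun k _ => hprod j k]
  simp_rw [integral_finsetSum _ fun k _ => hprod _ k, integral_const_mul, hcov, mul_ite,
    mul_zero, sum_ite_eq, mem_univ, if_true, mul_apply, transpose_apply, mul_sum]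
  exact sum_congr rfl fun j _ => by ring

theorem integral_const_sub_mul_sq [IsProbabilityMeasure μ] {Z : Ω → ℝ} (hZ : MemLp Z 2 μ)
    (c g : ℝ) :
    ∫ ω, (c - g * Z ω) ^ 2 ∂μ = c ^ 2 - 2 * c * g * ∫ ω, Z ω ∂μ + g ^ 2 * ∫ ω, Z ω ^ 2 ∂μ := by
  have hZ1 : Integrable Z μ := hZ.integrable one_le_two
  have hexpand : (fun ω => (c - g * Z ω) ^ 2)
      = fun ω => c ^ 2 - 2 * c * g * Z ω + g ^ 2 * Z ω ^ 2 := by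
    funext ω; ring
  have hlin : Integrable (fun ω => c ^ 2 - 2 * c * g * Z ω) μ :=
    (integrable_const _).sub (hZ1.const_mul _)
  rw [hexpand, integral_add hlin (hZ.integrable_sq.const_mul _),
    integral_sub (integrable_const _) (hZ1.const_mul _), integral_const_mul, integral_const_mul,
    integral_const, probReal_univ, one_smul]

end WhiteNoise

theorem wiener_error_eq {a x s : ℝ} (hD : a ^ 2 * x ^ 2 + s ≠ 0) :
    ((1 - a * x ^ 2 / (a ^ 2 * x ^ 2 + s) * a) * x) ^ 2 + (a * x ^ 2 / (a ^ 2 * x ^ 2 + s)) ^ 2 * s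
      = s * x ^ 2 / (a ^ 2 * x ^ 2 + s) := by
  field_simp
  ring

theorem wiener_error_le_inverse_error {a x s : ℝ} (hs : 0 < s) (ha : a ≠ 0) :
    s * x ^ 2 / (a ^ 2 * x ^ 2 + s) ≤ s / a ^ 2 := by
  rw [div_le_div_iff₀ (by positivity) (by positivity)]
  nlinarith [sq_nonneg s]

/-- probabilistic form of Proposition 2: in the spectral reconstruction
`x̂ = U diag(g_d(λ_i) g_c(λ_i)) Uᵀ x + U diag(g_d(λ_i)) Uᵀ ε` with `U` orthogonal,
`x` deterministic with `x* = Uᵀ x`, `ε` mean-zero with `E[ε_i ε_j] = σ² δ_{ij}` and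
`σ² > 0`, if the deconvolution filter takes the wiener values
`g_d(λ_i) = g_c(λ_i) (x*_i)² / (g_c(λ_i)² (x*_i)² + σ²)`, then
`E‖x − x̂‖² = ∑ i, σ² (x*_i)² / (g_c(λ_i)² (x*_i)² + σ²)`, and this is at most
`∑ i, σ² / g_c(λ_i)²` whenever `g_c(λ_i) ≠ 0` for all `i`. -/
theorem wiener_filter_reconstruction_mse
    {N : ℕ} {Ω : Type*} [MeasurableSpace Ω] (μ : Measure Ω) [IsProbabilityMeasure μ]
    (ε : Ω → Fin N → ℝ) (hεL2 : ∀ i, MemLp (fun ω => ε ω i) 2 μ)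
    (hεmean : ∀ i, ∫ ω, ε ω i ∂μ = 0)
    (σ2 : ℝ) (hσ2 : 0 < σ2)
    (hcov : ∀ i j, ∫ ω, ε ω i * ε ω j ∂μ = if i = j then σ2 else 0)
    (U : Matrix (Fin N) (Fin N) ℝ) (hU : Uᵀ * U = 1)
    (lam : Fin N → ℝ) (gc gd : ℝ → ℝ) (x : Fin N → ℝ)
    (xstar : Fin N → ℝ) (hxstar : xstar = Uᵀ.mulVec x)
    (hgd : ∀ i, gd (lam i)
      = gc (lam i) * xstar i ^ 2 / (gc (lam i) ^ 2 * xstar i ^ 2 + σ2))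
    (xhat : Ω → Fin N → ℝ)
    (hxhat : ∀ ω, xhat ω =
      U.mulVec ((Matrix.diagonal fun i => gd (lam i) * gc (lam i)).mulVec (Uᵀ.mulVec x))
        + U.mulVec ((Matrix.diagonal fun i => gd (lam i)).mulVec (Uᵀ.mulVec (ε ω)))) :
    (∫ ω, ‖(EuclideanSpace.equiv (Fin N) ℝ).symm (x - xhat ω)‖ ^ 2 ∂μ
        = ∑ i, σ2 * xstar i ^ 2 / (gc (lam i) ^ 2 * xstar i ^ 2 + σ2))
      ∧ ((∀ i, gc (lam i) ≠ 0) →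
          ∑ i, σ2 * xstar i ^ 2 / (gc (lam i) ^ 2 * xstar i ^ 2 + σ2)
            ≤ ∑ i, σ2 / gc (lam i) ^ 2) := by
  have hD : ∀ i, gc (lam i) ^ 2 * xstar i ^ 2 + σ2 ≠ 0 := fun i => by positivity
  refine ⟨?_, fun hgc => sum_le_sum fun i _ => wiener_error_le_inverse_error hσ2 (hgc i)⟩
  have hnoise : ∀ i, MemLp (fun ω => (Uᵀ *ᵥ ε ω) i) 2 μ := memLp_mulVec_apply hεL2 Uᵀ
  have hcoord : ∀ i, MemLp
      (fun ω => (1 - gd (lam i) * gc (lam i)) * xstar i - gd (lam i) * (Uᵀ *ᵥ ε ω) i) 2 μ :=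
    fun i => (memLp_const _).sub ((hnoise i).const_mul _)
  simp_rw [hxhat, sub_spectral_filter_eq (mul_eq_one_comm.mp hU), ← hxstar,
    norm_sq_equiv_symm_mulVec hU]
  rw [integral_finsetSum _ fun i _ => (hcoord i).integrable_sq]
  refine sum_congr rfl fun i _ => ?_
  rw [integral_const_sub_mul_sq (hnoise i),
    integral_mulVec_apply_eq_zero (fun j => (hεL2 j).integrable one_le_two) hεmean,
    integral_mulVec_apply_sq hεL2 hcov, transpose_transpose, hU, one_apply_eq, hgd i,
    ← wiener_error_eq (hD i)]
  ring
end
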